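/- Let f : E → ℝ be convex with a sharp minimum at x⋆ (0 ∈ int ∂f(x⋆)), and suppose g ≠ 0 lies in the neighborhood of 0 on which f* is linear (f*(g') = g'·x⋆ − f(x⋆)). Then ∂f*(g; g) = g·x⋆ = ∂f*(0; g), so the estimate f*(0) − ξ' ≤ ∂f*(g; g) − ∂f*(0; g) forces ξ' = f*(0); i.e., the conjugate epi-projection algorithm terminates finitely once its projected gradient g_p^k enters this neighborhood. -/

import Mathlib

/-!
Wherever `f*(h) = ⟪h, x⋆⟫ - f(x⋆)` holds honestly, `x⋆` is a subgradient of `f*`. Since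
`0 ∈ int ∂f(x⋆)`, `f*` is affine near `0`, so `∂f*(0) = {x⋆}`. At `g`: if some `t • g` with
`t > 1` is still in the ball and in `dom f*`, then `t • g ∈ ∂f(x⋆)`, and testing the
subgradient inequality of `y ∈ ∂f*(g)` at `t • g` gives `⟪y, g⟫ ≤ ⟪g, x⋆⟫`. Otherwise `g` is a
boundary point of `dom f*`: the real-valued `conj` is the junk `0` along the ray beyond `g`,
which forces `⟪g, x⋆⟫ = 0`, while adding multiples of an outward normal of `dom f*` at `g`
makes `∂f*(g)` unbounded in direction `g`, so its supremum is the junk `0` as well.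
-/

open scoped RealInnerProductSpace
open Filter

variable {E : Type*} [NormedAddCommGroup E] [InnerProductSpace ℝ E] [FiniteDimensional ℝ E]

/-- Fenchel conjugate `f*(g) = sup_x (g·x - f x)` (real-valued supremum). -/
noncomputable def conj (f : E → ℝ) (g : E) : ℝ := ⨆ x, (⟪g, x⟫ - f x)

def subdiff (f : E → ℝ) (x : E) : Set E := {g | ∀ y, f y - f x ≥ ⟪g, y - x⟫}

/-- Epigraph of the conjugate function: `{(μ, g) : μ ≥ f*(g)}` (including the
domain condition, correct even where `f* = +∞`). -/
def epiConj (f : E → ℝ) : Set (ℝ × E) := {p | ∀ x, ⟪p.2, x⟫ - f x ≤ p.1}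

/-- Subdifferential of the conjugate `f*` at `g₀`: `x` with
`f*(g) ≥ f*(g₀) + x·(g - g₀)` for all `g` (stated via upper bounds `μ ≥ f*(g)`). -/
def subdiffConj (f : E → ℝ) (g₀ : E) : Set E :=
  {x | ∀ p ∈ epiConj f, p.1 - conj f g₀ ≥ ⟪x, p.2 - g₀⟫}

/-- Directional derivative of the conjugate: `∂f*(g₀; d) = sup_{x ∈ ∂f*(g₀)} x·d`. -/
noncomputable def dirDConj (f : E → ℝ) (g₀ d : E) : ℝ :=
  sSup ((fun x => ⟪x, d⟫) '' subdiffConj f g₀)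

noncomputable def dirD (h : E → ℝ) (g d : E) : ℝ :=
  sSup ((fun x => ⟪x, d⟫) '' subdiff h g)

open Set Topology

/-- The effective domain `dom f*`; outside it `conj f` takes the junk value `0`. -/
def conjDom (f : E → ℝ) : Set E := {h | BddAbove (range fun x => ⟪h, x⟫ - f x)}

section

omit [FiniteDimensional ℝ E]

variable {f : E → ℝ} {x g h y : E}

theorem mem_subdiff_iff_forall_le : h ∈ subdiff f x ↔ ∀ y, ⟪h, y⟫ - f y ≤ ⟪h, x⟫ - f x :=
  forall_congr' fun y => by rw [inner_sub_right]; constructor <;> intro <;> linarith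

theorem subdiff_subset_conjDom : subdiff f x ⊆ conjDom f := fun _ hh =>
  ⟨_, forall_mem_range.2 (mem_subdiff_iff_forall_le.1 hh)⟩

theorem conj_eq_of_mem_subdiff (hh : h ∈ subdiff f x) : conj f h = ⟪h, x⟫ - f x :=
  le_antisymm (ciSup_le (mem_subdiff_iff_forall_le.1 hh))
    (le_ciSup (subdiff_subset_conjDom hh) x)

theorem mem_subdiff_of_conj_eq (hh : h ∈ conjDom f) (heq : conj f h = ⟪h, x⟫ - f x) :
    h ∈ subdiff f x :=
  mem_subdiff_iff_forall_le.2 fun y => heq ▸ le_ciSup hh y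

theorem convex_conjDom : Convex ℝ (conjDom f) := by
  rintro h₁ ⟨M₁, hM₁⟩ h₂ ⟨M₂, hM₂⟩ a b ha hb hab
  refine ⟨a * M₁ + b * M₂, forall_mem_range.2 fun y => ?_⟩
  have hy₁ : ⟪h₁, y⟫ - f y ≤ M₁ := hM₁ (mem_range_self y)
  have hy₂ : ⟪h₂, y⟫ - f y ≤ M₂ := hM₂ (mem_range_self y)
  have hcomb : ⟪a • h₁ + b • h₂, y⟫ - f y = a * (⟪h₁, y⟫ - f y) + b * (⟪h₂, y⟫ - f y) := by
    rw [inner_add_left, real_inner_smul_left, real_inner_smul_left]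
    linear_combination f y * hab
  rw [hcomb]
  gcongr

theorem mem_subdiffConj_of_conj_eq (hg : conj f g = ⟪g, x⟫ - f x) : x ∈ subdiffConj f g :=
  fun p hp => by
    have := hp x
    rw [hg, inner_sub_right]
    linarith [real_inner_comm x p.2, real_inner_comm x g]

theorem inner_sub_le_of_mem_subdiffConj (hg : conj f g = ⟪g, x⟫ - f x)
    (hh : h ∈ subdiff f x) (hy : y ∈ subdiffConj f g) : ⟪y, h - g⟫ ≤ ⟪h - g, x⟫ := by
  have := hy (⟪h, x⟫ - f x, h) (mem_subdiff_iff_forall_le.1 hh)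
  rw [hg] at this
  rw [inner_sub_left]
  linarith

theorem subdiffConj_eq_singleton (hg : g ∈ interior (subdiff f x)) : subdiffConj f g = {x} := by
  refine eq_singleton_iff_unique_mem.2
    ⟨mem_subdiffConj_of_conj_eq (conj_eq_of_mem_subdiff (interior_subset hg)), fun y hy => ?_⟩
  have hline : Tendsto (fun s : ℝ => g + s • (y - x)) (𝓝 0) (𝓝 g) :=
    (by fun_prop : Continuous fun s : ℝ => g + s • (y - x)).tendsto' 0 g (by simp)
  have hnear : ∀ᶠ s in 𝓝[>] (0 : ℝ), g + s • (y - x) ∈ subdiff f x :=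
    (hline.eventually_mem (mem_interior_iff_mem_nhds.1 hg)).filter_mono nhdsWithin_le_nhds
  obtain ⟨s, hs, hs0⟩ := (hnear.and self_mem_nhdsWithin).exists
  have key := inner_sub_le_of_mem_subdiffConj (conj_eq_of_mem_subdiff (interior_subset hg)) hs hy
  rw [add_sub_cancel_left] at key
  have hsq : s * ‖y - x‖ ^ 2 ≤ 0 := by
    rw [← real_inner_self_eq_norm_sq, ← real_inner_smul_right, inner_sub_left,
      ← real_inner_comm x]
    linarith
  have : ‖y - x‖ ^ 2 ≤ 0 := nonpos_of_mul_nonpos_right hsq hs0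
  simpa [sub_eq_zero] using this

theorem dirDConj_eq_of_mem_interior_subdiff (hg : g ∈ interior (subdiff f x)) (d : E) :
    dirDConj f g d = ⟪x, d⟫ := by
  rw [dirDConj, subdiffConj_eq_singleton hg, image_singleton, csSup_singleton]

theorem add_smul_mem_subdiffConj {d : E} (hy : y ∈ subdiffConj f g)
    (hd : ∀ h ∈ conjDom f, ⟪d, h⟫ ≤ ⟪d, g⟫) {c : ℝ} (hc : 0 ≤ c) : y + c • d ∈ subdiffConj f g :=
  fun p hp => by
    have hnormal : ⟪d, p.2 - g⟫ ≤ 0 := by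
      rw [inner_sub_right, sub_nonpos]
      exact hd _ ⟨p.1, forall_mem_range.2 hp⟩
    rw [inner_add_left, real_inner_smul_left]
    linarith [hy p hp, mul_nonpos_of_nonneg_of_nonpos hc hnormal]

theorem exists_inner_lt_of_notMem_interior [CompleteSpace E] {A : Set E} (hA : Convex ℝ A)
    (hh : h ∈ interior A) (hg : g ∉ interior A) :
    ∃ d : E, (∀ a ∈ A, ⟪d, a⟫ ≤ ⟪d, g⟫) ∧ ⟪d, h⟫ < ⟪d, g⟫ := by
  obtain ⟨φ, hφ0, hφ⟩ := geometric_hahn_banach_of_nonempty_interior_point hA hg ⟨h, hh⟩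
  have himage : φ '' interior A ∈ 𝓝 (φ h) :=
    (φ.isOpenMap_of_ne_zero hφ0 _ isOpen_interior).mem_nhds (mem_image_of_mem φ hh)
  obtain ⟨_, ⟨a, ha, rfl⟩, hlt⟩ := Filter.nonempty_of_mem
    (inter_mem (mem_nhdsWithin_of_mem_nhds himage) self_mem_nhdsWithin :
      φ '' interior A ∩ Ioi (φ h) ∈ 𝓝[>] φ h)
  refine ⟨(InnerProductSpace.toDual ℝ E).symm φ, fun a ha => ?_, ?_⟩ <;>
    simp only [InnerProductSpace.toDual_symm_apply]
  · exact hφ a ha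
  · exact hlt.trans_le (hφ a (interior_subset ha))

theorem not_bddAbove_inner_subdiffConj [CompleteSpace E] (hh : h ∈ interior (conjDom f))
    (hg : g ∉ interior (conjDom f)) (hy : y ∈ subdiffConj f g) :
    ¬BddAbove ((fun z => ⟪z, g - h⟫) '' subdiffConj f g) := by
  obtain ⟨d, hd, hlt⟩ := exists_inner_lt_of_notMem_interior convex_conjDom hh hg
  have hδ : 0 < ⟪d, g - h⟫ := by rw [inner_sub_right]; linarith
  rintro ⟨M, hM⟩
  set c := (|M - ⟪y, g - h⟫| + 1) / ⟪d, g - h⟫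
  have hc : c * ⟪d, g - h⟫ = |M - ⟪y, g - h⟫| + 1 := div_mul_cancel₀ _ hδ.ne'
  have := hM ⟨_, add_smul_mem_subdiffConj hy hd (c := c) (by positivity), rfl⟩
  simp only [inner_add_left, real_inner_smul_left, hc] at this
  linarith [le_abs_self (M - ⟪y, g - h⟫)]

theorem dirDConj_self_eq_of_smul_mem_subdiff (hg : conj f g = ⟪g, x⟫ - f x) {t : ℝ}
    (ht : 1 < t) (htg : t • g ∈ subdiff f x) : dirDConj f g g = ⟪g, x⟫ := by
  refine IsGreatest.csSup_eq
    ⟨⟨x, mem_subdiffConj_of_conj_eq hg, real_inner_comm _ _⟩, ?_⟩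
  rintro _ ⟨y, hy, rfl⟩
  have key := inner_sub_le_of_mem_subdiffConj hg htg hy
  have hsub : t • g - g = (t - 1) • g := by rw [sub_smul, one_smul]
  rw [hsub, real_inner_smul_right, real_inner_smul_left] at key
  exact le_of_mul_le_mul_left key (sub_pos.2 ht)

theorem dirDConj_self_eq_of_forall_smul_notMem_conjDom [CompleteSpace E] {ρ : ℝ}
    (h₀ : (0 : E) ∈ interior (conjDom f))
    (hlin : ∀ h : E, ‖h‖ < ρ → conj f h = ⟪h, x⟫ - f x) (hgρ : ‖g‖ < ρ)
    (hext : ∀ t > (1 : ℝ), ‖t • g‖ < ρ → t • g ∉ conjDom f) :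
    dirDConj f g g = ⟪g, x⟫ := by
  have hray : Tendsto (fun t : ℝ => t • g) (𝓝 1) (𝓝 g) :=
    (by fun_prop : Continuous fun t : ℝ => t • g).tendsto' 1 g (one_smul ℝ g)
  have hball : ∀ᶠ t in 𝓝 (1 : ℝ), ‖t • g‖ < ρ :=
    (hray.eventually_mem (Metric.isOpen_ball.mem_nhds (mem_ball_zero_iff.2 hgρ))).mono
      fun _ ht => mem_ball_zero_iff.1 ht
  have hjunk : ∀ᶠ t in 𝓝[>] (1 : ℝ), t * ⟪g, x⟫ = f x := by
    filter_upwards [hball.filter_mono nhdsWithin_le_nhds, self_mem_nhdsWithin] with t htρ ht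
    have hzero : conj f (t • g) = 0 := Real.iSup_of_not_bddAbove (hext t ht htρ)
    rw [hlin _ htρ, real_inner_smul_left] at hzero
    linarith
  obtain ⟨t₁, ht₁, ht₁_gt⟩ := (hjunk.and self_mem_nhdsWithin).exists
  obtain ⟨t₂, ht₂, ht₂_mem⟩ := (hjunk.and (Ioo_mem_nhdsGT ht₁_gt)).exists
  have hgx : ⟪g, x⟫ = 0 := by
    have hdiff : (t₁ - t₂) * ⟪g, x⟫ = 0 := by linarith
    exact (mul_eq_zero.1 hdiff).resolve_left (sub_ne_zero.2 ht₂_mem.2.ne')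
  have hbdry : g ∉ interior (conjDom f) := fun hg => by
    obtain ⟨t, ⟨htρ, htdom⟩, ht⟩ := (((hball.and (hray.eventually_mem
      (mem_interior_iff_mem_nhds.1 hg))).filter_mono nhdsWithin_le_nhds).and
      (self_mem_nhdsWithin : Ioi (1 : ℝ) ∈ 𝓝[>] 1)).exists
    exact hext t ht htρ htdom
  have hunb := not_bddAbove_inner_subdiffConj h₀ hbdry (mem_subdiffConj_of_conj_eq (hlin g hgρ))
  rw [sub_zero] at hunb
  rw [dirDConj, Real.sSup_of_not_bddAbove hunb, hgx]

theorem dirDConj_self_eq [CompleteSpace E] {ρ : ℝ} (h₀ : (0 : E) ∈ interior (conjDom f))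
    (hlin : ∀ h : E, ‖h‖ < ρ → conj f h = ⟪h, x⟫ - f x) (hgρ : ‖g‖ < ρ) :
    dirDConj f g g = ⟪g, x⟫ := by
  by_cases hext : ∃ t > (1 : ℝ), ‖t • g‖ < ρ ∧ t • g ∈ conjDom f
  · obtain ⟨t, ht, htρ, htdom⟩ := hext
    exact dirDConj_self_eq_of_smul_mem_subdiff (hlin g hgρ) ht
      (mem_subdiff_of_conj_eq htdom (hlin _ htρ))
  · push Not at hext
    exact dirDConj_self_eq_of_forall_smul_notMem_conjDom h₀ hlin hgρ hext

end

theorem finite_termination_of_sharp_min_general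
    (f : E → ℝ) (xs : E)
    (hsharp : (0 : E) ∈ interior (subdiff f xs))
    (ρ : ℝ)
    (hlin : ∀ g : E, ‖g‖ < ρ → conj f g = ⟪g, xs⟫ - f xs)
    (g : E) (hgρ : ‖g‖ < ρ) :
    dirDConj f g g = ⟪g, xs⟫ ∧ dirDConj f 0 g = ⟪g, xs⟫ ∧
      ∀ ξ' : ℝ, ξ' ≤ conj f 0 →
        conj f 0 - ξ' ≤ dirDConj f g g - dirDConj f 0 g → ξ' = conj f 0 := by
  have hdir_g : dirDConj f g g = ⟪g, xs⟫ := dirDConj_self_eq (interior_mono subdiff_subset_conjDom hsharp) hlin hgρ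
  have hdir_0 : dirDConj f 0 g = ⟪g, xs⟫ := by
    rw [dirDConj_eq_of_mem_interior_subdiff hsharp, real_inner_comm]
  refine ⟨hdir_g, hdir_0, fun ξ' _ hprogress => ?_⟩
  rw [hdir_g, hdir_0, sub_self] at hprogress
  linarith

/-- under a sharp minimum, once g ≠ 0 lies in the ball where f*
is linear, ∂f*(g; g) = g·x⋆ = ∂f*(0; g), and the progress estimate forces
finite termination ξ' = f*(0). -/
theorem finite_termination_of_sharp_min
    (f : E → ℝ) (hf : ConvexOn ℝ Set.univ f) (xs : E)
    (hsharp : (0 : E) ∈ interior (subdiff f xs))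
    (ρ : ℝ) (hρ : 0 < ρ)
    (hlin : ∀ g : E, ‖g‖ < ρ → conj f g = ⟪g, xs⟫ - f xs)
    (g : E) (hg : g ≠ 0) (hgρ : ‖g‖ < ρ) :
    dirDConj f g g = ⟪g, xs⟫ ∧ dirDConj f 0 g = ⟪g, xs⟫ ∧
      ∀ ξ' : ℝ, ξ' ≤ conj f 0 →
        conj f 0 - ξ' ≤ dirDConj f g g - dirDConj f 0 g → ξ' = conj f 0 :=
  finite_termination_of_sharp_min_general f xs hsharp ρ hlin g hgρ
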